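/- Let p ≥ 2 and β ≥ 1. Let μ₁, …, μ_r be probability measures on ℝ^d, each with finite p-th moment and each satisfying (∫|⟨x,v⟩|^p dμ_i(x))^{1/p} ≤ β (∫|⟨x,v⟩|² dμ_i(x))^{1/2} for all v ∈ ℝ^d. Let α₁, …, α_r > 0 with Σ_{i=1}^r α_i = 1. Then the mixture μ = Σ_{i=1}^r α_i μ_i satisfies (∫|⟨x,v⟩|^p dμ(x))^{1/p} ≤ β · (max_{1 ≤ i ≤ r} α_i^{(1/p)−(1/2)}) · (∫|⟨x,v⟩|² dμ(x))^{1/2} for all v ∈ ℝ^d. -/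

import Mathlib

open MeasureTheory
open scoped ENNReal RealInnerProductSpace Classical

noncomputable section

/-- The outer product `x xᵀ` of a vector in Euclidean space, as a matrix. -/
def outer {d : ℕ} (x : EuclideanSpace ℝ (Fin d)) : Matrix (Fin d) (Fin d) ℝ :=
  Matrix.of fun i j => x i * x j

/-- The trace inner product `⟨A, B⟩ = Tr (A B)` on symmetric matrices. -/
def minner {d : ℕ} (A B : Matrix (Fin d) (Fin d) ℝ) : ℝ :=
  Matrix.trace (A * B)

/-- The Frobenius norm of a matrix. -/
def frobNorm {d : ℕ} (M : Matrix (Fin d) (Fin d) ℝ) : ℝ :=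
  Real.sqrt (∑ i, ∑ j, (M i j) ^ 2)

/-- Entrywise integral of a matrix-valued function. -/
def mIntegral {d : ℕ} (μ : Measure (EuclideanSpace ℝ (Fin d)))
    (F : EuclideanSpace ℝ (Fin d) → Matrix (Fin d) (Fin d) ℝ) :
    Matrix (Fin d) (Fin d) ℝ :=
  Matrix.of fun i j => ∫ x, F x i j ∂μ

/-- The fourth moment operator `T_μ (A) = ∫ ⟨A, xxᵀ⟩ xxᵀ dμ(x)`. -/
def fourthMomentOp {d : ℕ} (μ : Measure (EuclideanSpace ℝ (Fin d)))
    (A : Matrix (Fin d) (Fin d) ℝ) : Matrix (Fin d) (Fin d) ℝ :=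
  mIntegral μ (fun x => minner A (outer x) • outer x)

/-- The second moment matrix `B = ∫ xxᵀ dμ(x)`. -/
def secondMoment {d : ℕ} (μ : Measure (EuclideanSpace ℝ (Fin d))) :
    Matrix (Fin d) (Fin d) ℝ :=
  mIntegral μ outer

/-- `lam : ℕ → ℝ` lists the eigenvalues (with multiplicity) of the fourth moment operator
`T_μ`, viewed as an operator on the `d(d+1)/2`-dimensional inner product space of symmetric
matrices, in descending order, padded by `0` beyond index `d(d+1)/2`. -/
def IsEigenSeq {d : ℕ} (μ : Measure (EuclideanSpace ℝ (Fin d))) (lam : ℕ → ℝ) : Prop :=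
  Antitone lam ∧ (∀ i, d * (d + 1) / 2 ≤ i → lam i = 0) ∧
  ∃ b : Fin (d * (d + 1) / 2) → Matrix (Fin d) (Fin d) ℝ,
    (∀ i, (b i).IsSymm) ∧
    (∀ i j, minner (b i) (b j) = if i = j then 1 else 0) ∧
    (∀ A : Matrix (Fin d) (Fin d) ℝ, A.IsSymm → A ∈ Submodule.span ℝ (Set.range b)) ∧
    (∀ i : Fin (d * (d + 1) / 2), fourthMomentOp μ (b i) = lam i • b i)

/-- The second order separation parameter `s(μ)`. -/
def sep {d : ℕ} (μ : Measure (EuclideanSpace ℝ (Fin d))) : ℝ :=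
  (1 / 2) * sSup { r : ℝ | ∃ μ₁ μ₂ : Measure (EuclideanSpace ℝ (Fin d)),
    IsProbabilityMeasure μ₁ ∧ IsProbabilityMeasure μ₂ ∧
    μ = (2 : ℝ≥0∞)⁻¹ • μ₁ + (2 : ℝ≥0∞)⁻¹ • μ₂ ∧
    r = frobNorm (secondMoment μ₁ - secondMoment μ₂) }

/-- The standard Gaussian measure `N(0, I)` on `ℝ^d`. -/
def stdGaussian (d : ℕ) : Measure (EuclideanSpace ℝ (Fin d)) :=
  (Measure.pi fun _ : Fin d => ProbabilityTheory.gaussianReal 0 1).map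
    (MeasurableEquiv.toLp 2 (Fin d → ℝ))

/-- The centered Gaussian measure `N(0, B)` on `ℝ^d` with positive semidefinite
covariance matrix `B`, obtained as the pushforward of `N(0, I)` by `B^{1/2}`. -/
def gaussianCov {d : ℕ} (B : Matrix (Fin d) (Fin d) ℝ) :
    Measure (EuclideanSpace ℝ (Fin d)) :=
  if hB : B.PosSemidef then (stdGaussian d).map (fun x => Matrix.toEuclideanLin ((hB.1.eigenvectorUnitary : Matrix (Fin d) (Fin d) ℝ) *
      Matrix.diagonal ((RCLike.ofReal : ℝ → ℝ) ∘ (√·) ∘ hB.1.eigenvalues) *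
      (star hB.1.eigenvectorUnitary : Matrix (Fin d) (Fin d) ℝ)) x)
  else 0

/-- The positive semidefinite square root `B^{1/2}` of a positive semidefinite matrix. -/
def psdSqrt {d : ℕ} (B : Matrix (Fin d) (Fin d) ℝ) : Matrix (Fin d) (Fin d) ℝ :=
  if hB : B.PosSemidef then (hB.1.eigenvectorUnitary : Matrix (Fin d) (Fin d) ℝ) *
      Matrix.diagonal ((RCLike.ofReal : ℝ → ℝ) ∘ (√·) ∘ hB.1.eigenvalues) *
    (star hB.1.eigenvectorUnitary : Matrix (Fin d) (Fin d) ℝ) else 0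

/-! Write `s_i = ∫ ⟪x, v⟫² dμ_i` and `t_i = α_i s_i`. Moments of the mixture are the
`α`-weighted sums of those of the components, and for each component the hypothesis gives
`α_i ∫ |⟪x, v⟫|ᵖ dμ_i ≤ βᵖ α_i s_i^{p/2} = βᵖ (α_i^{1/p - 1/2})ᵖ t_i^{p/2}`.
Since `p/2 ≥ 1`, the power `t ↦ t^{p/2}` is superadditive, so `∑ t_i^{p/2} ≤ (∑ t_i)^{p/2}`,
and taking `p`-th roots gives the bound for the mixture. -/

open Finset

theorem integral_sum_ofReal_smul_measure {Ω ι : Type*} [MeasurableSpace Ω] [Fintype ι]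
    {μ : ι → Measure Ω} {α : ι → ℝ} (hα : ∀ i, 0 ≤ α i) {f : Ω → ℝ}
    (hf : ∀ i, Integrable f (μ i)) :
    ∫ x, f x ∂(∑ i, ENNReal.ofReal (α i) • μ i) = ∑ i, α i * ∫ x, f x ∂(μ i) := by
  rw [integral_finsetSum_measure fun i _ => (hf i).smul_measure ENNReal.ofReal_ne_top]
  simp only [integral_smul_measure, ENNReal.toReal_ofReal (hα _), smul_eq_mul]

theorem memLp_inner_const_of_integrable_norm_rpow {E : Type*} [NormedAddCommGroup E]
    [InnerProductSpace ℝ E] [MeasurableSpace E] [OpensMeasurableSpace E]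
    [SecondCountableTopology E] {μ : Measure E} [IsFiniteMeasure μ] {p : ℝ} (hp : 0 < p)
    (hmom : Integrable (fun x => ‖x‖ ^ p) μ) {q : ℝ≥0∞} (hq : q ≤ ENNReal.ofReal p) (v : E) :
    MemLp (fun x => ⟪x, v⟫) q μ := by
  have hid : MemLp id (ENNReal.ofReal p) μ := by
    rw [← integrable_norm_rpow_iff (by fun_prop) (by simpa using hp) ENNReal.ofReal_ne_top,
      ENNReal.toReal_ofReal hp.le]
    exact hmom
  exact (hid.mono_exponent hq).inner_const v

theorem sum_rpow_le_rpow_sum {ι : Type*} (s : Finset ι) {t : ι → ℝ} (ht : ∀ i ∈ s, 0 ≤ t i)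
    {q : ℝ} (hq : 1 ≤ q) : ∑ i ∈ s, t i ^ q ≤ (∑ i ∈ s, t i) ^ q := by
  set T := ∑ i ∈ s, t i
  have hT : 0 ≤ T := sum_nonneg ht
  have hsplit : ∀ x : ℝ, 0 ≤ x → x ^ q = x * x ^ (q - 1) := fun x hx => by
    rw [← Real.rpow_one_add' hx (by linarith), add_sub_cancel]
  calc ∑ i ∈ s, t i ^ q ≤ ∑ i ∈ s, t i * T ^ (q - 1) := sum_le_sum fun i hi => by
        rw [hsplit _ (ht i hi)]
        exact mul_le_mul_of_nonneg_left
          (Real.rpow_le_rpow (ht i hi) (single_le_sum ht hi) (by linarith)) (ht i hi)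
    _ = T ^ q := by rw [← sum_mul, ← hsplit _ hT]

theorem rpow_one_div_le_mul_rpow_one_half_iff {x c t p : ℝ} (hx : 0 ≤ x) (hc : 0 ≤ c)
    (ht : 0 ≤ t) (hp : 0 < p) :
    x ^ (1 / p) ≤ c * t ^ (1 / 2 : ℝ) ↔ x ≤ c ^ p * t ^ (p / 2) := by
  rw [one_div, Real.rpow_inv_le_iff_of_pos hx (by positivity) hp,
    Real.mul_rpow hc (by positivity), ← Real.rpow_mul ht, one_div_mul_eq_div]

theorem mul_rpow_div_two_eq {a s p : ℝ} (ha : 0 < a) (hs : 0 ≤ s) (hp : p ≠ 0) :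
    a * s ^ (p / 2) = (a ^ (1 / p - 1 / 2)) ^ p * (a * s) ^ (p / 2) := by
  rw [← Real.rpow_mul ha.le, Real.mul_rpow ha.le hs, ← mul_assoc, ← Real.rpow_add ha]
  congr 1
  nth_rewrite 1 [← Real.rpow_one a]
  congr 1
  field_simp
  ring

theorem rpow_sum_mul_le_of_rpow_le {ι : Type*} [Fintype ι] {p β M : ℝ} (hp : 2 ≤ p)
    (hβ : 0 ≤ β) (hM : 0 ≤ M) {α a s : ι → ℝ} (hα : ∀ i, 0 < α i) (ha : ∀ i, 0 ≤ a i)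
    (hs : ∀ i, 0 ≤ s i) (hαM : ∀ i, α i ^ (1 / p - 1 / 2) ≤ M)
    (hlpl2 : ∀ i, a i ^ (1 / p) ≤ β * s i ^ (1 / 2 : ℝ)) :
    (∑ i, α i * a i) ^ (1 / p) ≤ β * M * (∑ i, α i * s i) ^ (1 / 2 : ℝ) := by
  have hp0 : 0 < p := by linarith
  have hterm : ∀ i, α i * a i ≤ (β * M) ^ p * (α i * s i) ^ (p / 2) := fun i => by
    have hai := (rpow_one_div_le_mul_rpow_one_half_iff (ha i) hβ (hs i) hp0).1 (hlpl2 i)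
    have hαi : (α i ^ (1 / p - 1 / 2)) ^ p ≤ M ^ p :=
      Real.rpow_le_rpow (by have := hα i; positivity) (hαM i) hp0.le
    calc α i * a i ≤ α i * (β ^ p * s i ^ (p / 2)) := mul_le_mul_of_nonneg_left hai (hα i).le
      _ = β ^ p * ((α i ^ (1 / p - 1 / 2)) ^ p * (α i * s i) ^ (p / 2)) := by
          rw [mul_left_comm, mul_rpow_div_two_eq (hα i) (hs i) hp0.ne']
      _ ≤ β ^ p * (M ^ p * (α i * s i) ^ (p / 2)) := by
          have := hα i; have := hs i
          gcongr
      _ = (β * M) ^ p * (α i * s i) ^ (p / 2) := by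
          rw [Real.mul_rpow hβ hM, mul_assoc]
  have ht : ∀ i ∈ univ, 0 ≤ α i * s i := fun i _ => mul_nonneg (hα i).le (hs i)
  rw [rpow_one_div_le_mul_rpow_one_half_iff
    (sum_nonneg fun i _ => mul_nonneg (hα i).le (ha i)) (mul_nonneg hβ hM) (sum_nonneg ht) hp0]
  calc ∑ i, α i * a i ≤ ∑ i, (β * M) ^ p * (α i * s i) ^ (p / 2) :=
        sum_le_sum fun i _ => hterm i
    _ ≤ (β * M) ^ p * (∑ i, α i * s i) ^ (p / 2) := by
      rw [← mul_sum]
      gcongr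
      exact sum_rpow_le_rpow_sum _ ht (by linarith)

theorem mixture_lpl2_general
    (d r : ℕ) (p : ℝ) (hp : 2 ≤ p) (β : ℝ) (hβ : 1 ≤ β)
    (μs : Fin r → Measure (EuclideanSpace ℝ (Fin d)))
    (hprob : ∀ i, IsProbabilityMeasure (μs i))
    (hmom : ∀ i, Integrable (fun x => ‖x‖ ^ p) (μs i))
    (hlpl2 : ∀ i, ∀ v : EuclideanSpace ℝ (Fin d),
      (∫ x, (|⟪x, v⟫|) ^ p ∂(μs i)) ^ (1 / p) ≤
        β * (∫ x, ⟪x, v⟫ ^ 2 ∂(μs i)) ^ ((1 : ℝ) / 2))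
    (α : Fin r → ℝ) (hα : ∀ i, 0 < α i) :
    ∀ v : EuclideanSpace ℝ (Fin d),
      (∫ x, (|⟪x, v⟫|) ^ p ∂(∑ i, ENNReal.ofReal (α i) • μs i)) ^ (1 / p) ≤
        β * (⨆ i, α i ^ (1 / p - 1 / 2)) *
          (∫ x, ⟪x, v⟫ ^ 2 ∂(∑ i, ENNReal.ofReal (α i) • μs i)) ^ ((1 : ℝ) / 2) := by
  intro v
  have hp0 : 0 < p := by linarith
  have hinner (i) {q : ℝ≥0∞} (hq : q ≤ ENNReal.ofReal p) :
      MemLp (fun x => ⟪x, v⟫) q (μs i) :=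
    memLp_inner_const_of_integrable_norm_rpow hp0 (hmom i) hq v
  have hpth (i) : Integrable (fun x => |⟪x, v⟫| ^ p) (μs i) := by
    simpa [ENNReal.toReal_ofReal hp0.le] using
      (integrable_norm_rpow_iff (hinner i le_rfl).1 (by simpa using hp0)
        ENNReal.ofReal_ne_top).2 (hinner i le_rfl)
  have hsq (i) : Integrable (fun x => ⟪x, v⟫ ^ 2) (μs i) :=
    (hinner i (by simpa using ENNReal.ofReal_le_ofReal hp)).integrable_sq
  rw [integral_sum_ofReal_smul_measure (fun i => (hα i).le) hpth,
    integral_sum_ofReal_smul_measure (fun i => (hα i).le) hsq]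
  exact rpow_sum_mul_le_of_rpow_le hp (by linarith)
    (Real.iSup_nonneg fun i => (Real.rpow_pos_of_pos (hα i) _).le) hα
    (fun i => integral_nonneg fun x => by positivity)
    (fun i => integral_nonneg fun x => by positivity)
    (fun i => le_ciSup (f := fun i => α i ^ (1 / p - 1 / 2)) (Set.finite_range _).bddAbove i)
    (fun i => hlpl2 i v)

/-- a finite mixture of measures satisfying `Lᵖ`-`L²` equivalence with
constant `β` satisfies it with constant `β · maxᵢ αᵢ^{1/p - 1/2}`. -/
theorem mixture_lpl2
    (d r : ℕ) (p : ℝ) (hp : 2 ≤ p) (β : ℝ) (hβ : 1 ≤ β)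
    (μs : Fin r → Measure (EuclideanSpace ℝ (Fin d)))
    (hprob : ∀ i, IsProbabilityMeasure (μs i))
    (hmom : ∀ i, Integrable (fun x => ‖x‖ ^ p) (μs i))
    (hlpl2 : ∀ i, ∀ v : EuclideanSpace ℝ (Fin d),
      (∫ x, (|⟪x, v⟫|) ^ p ∂(μs i)) ^ (1 / p) ≤
        β * (∫ x, ⟪x, v⟫ ^ 2 ∂(μs i)) ^ ((1 : ℝ) / 2))
    (α : Fin r → ℝ) (hα : ∀ i, 0 < α i) (hsum : ∑ i, α i = 1) :
    ∀ v : EuclideanSpace ℝ (Fin d),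
      (∫ x, (|⟪x, v⟫|) ^ p ∂(∑ i, ENNReal.ofReal (α i) • μs i)) ^ (1 / p) ≤
        β * (⨆ i, α i ^ (1 / p - 1 / 2)) *
          (∫ x, ⟪x, v⟫ ^ 2 ∂(∑ i, ENNReal.ofReal (α i) • μs i)) ^ ((1 : ℝ) / 2) :=
  mixture_lpl2_general d r p hp β hβ μs hprob hmom hlpl2 α hα

end
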